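/- Let T be a reduced G-tree. A subgroup H ⊆ G is bi-elliptic in T if and only if it is contained in a subgroup K of one of the following forms: (1) K = A ∩ B, where A and B are elliptic but the subgroup generated by A and B is not elliptic; (2) K is elliptic and there exists a hyperbolic element g ∈ G such that K ⊆ gKg⁻¹. In particular, all reduced trees in a given deformation space have the same bi-elliptic subgroups. -/

import Mathlib

set_option autoImplicit false
set_option maxHeartbeats 1000000
open scoped Classical

universe u

section Trees

variable (G : Type u) [Group G]

/-- A (minimal, simplicial) `G`-tree: a simplicial tree together with an action of `G` by
simplicial automorphisms, without inversions, admitting no proper invariant subtree. -/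
structure GTree : Type (u + 1) where
  V : Type u
  nonempty : Nonempty V
  graph : SimpleGraph V
  isTree : graph.IsTree
  act : G →* Equiv.Perm V
  adj_act : ∀ (g : G) (u v : V), graph.Adj u v → graph.Adj (act g u) (act g v)
  noInversion : ∀ (g : G) (u v : V), graph.Adj u v → ¬(act g u = v ∧ act g v = u)
  minimal : ∀ S : Set V, S.Nonempty → (∀ (g : G), ∀ v ∈ S, act g v ∈ S) →
      (∀ u ∈ S, ∀ v ∈ S, ∀ p : graph.Walk u v, p.IsPath → ∀ w ∈ p.support, w ∈ S) →
      S = Set.univ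

variable {G}

namespace GTree

variable (T : GTree G)

/-- The stabilizer of a vertex. -/
def stab (v : T.V) : Subgroup G where
  carrier := {g : G | T.act g v = v}
  one_mem' := by simp
  mul_mem' := by
    intro a b ha hb
    simp only [Set.mem_setOf_eq, map_mul, Equiv.Perm.mul_apply] at *
    rw [hb, ha]
  inv_mem' := by
    intro a ha
    simp only [Set.mem_setOf_eq] at *
    have h : T.act a⁻¹ (T.act a v) = v := by
      rw [← Equiv.Perm.mul_apply, ← map_mul, inv_mul_cancel, map_one, Equiv.Perm.one_apply]
    rwa [ha] at h

/-- The (pointwise) stabilizer of an edge `uv`; since the action has no inversions this is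
the full stabilizer of the edge. -/
def edgeStab (u v : T.V) : Subgroup G := T.stab u ⊓ T.stab v

/-- A subgroup of `G` is elliptic if it fixes a vertex. -/
def Elliptic (H : Subgroup G) : Prop := ∃ v : T.V, ∀ h ∈ H, T.act h v = v

/-- An element of `G` is elliptic if it fixes a vertex. -/
def EllipticElt (g : G) : Prop := ∃ v : T.V, T.act g v = v

/-- An element of `G` is hyperbolic if it fixes no vertex. -/
def Hyperbolic (g : G) : Prop := ∀ v : T.V, T.act g v ≠ v

/-- A `G`-tree is reduced if whenever the stabilizer of an edge `uv` equals the stabilizer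
of `u` (i.e. `G_u ≤ G_v`), the two endpoints are in the same orbit. -/
def Reduced : Prop :=
  ∀ u v : T.V, T.graph.Adj u v → T.stab u ≤ T.stab v → ∃ g : G, T.act g u = v

/-- `T` is a single point. -/
protected def Trivial : Prop := ∀ u v : T.V, u = v

/-- `T` is a (simplicial) line. -/
def IsLine : Prop := ∀ v : T.V, ∃ a b : T.V, a ≠ b ∧ {w : T.V | T.graph.Adj v w} = {a, b}

/-- `G` fixes an end of `T`: there is an equivariant choice, for each vertex, of the next
vertex in the direction of the fixed end. -/
def FixesEnd : Prop :=
  ∃ next : T.V → T.V, (∀ v, T.graph.Adj v (next v)) ∧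
    (∀ (g : G) (v : T.V), next (T.act g v) = T.act g (next v)) ∧
    (∀ v, next (next v) ≠ v)

/-- Linear abelian type: `T` is a line on which `G` acts by translations (every element acts
either trivially or freely). -/
def LinearAbelian : Prop :=
  T.IsLine ∧ ∀ g : G, (∀ v : T.V, T.act g v = v) ∨ (∀ v : T.V, T.act g v ≠ v)

/-- Dihedral type: `T` is a line and some element acts as a reflection. -/
def Dihedral : Prop :=
  T.IsLine ∧ ∃ g : G, (∃ v : T.V, T.act g v = v) ∧ (∃ w : T.V, T.act g w ≠ w)

/-- Genuine abelian type: `G` fixes an end and `T` is not a line. -/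
def GenuineAbelian : Prop := T.FixesEnd ∧ ¬T.IsLine

/-- Irreducibility, via the characterization by hyperbolicity of a commutator. -/
def Irred : Prop :=
  ∃ g h : G, T.Hyperbolic g ∧ T.Hyperbolic h ∧ T.Hyperbolic (g * h * g⁻¹ * h⁻¹)

/-- The image of a dart (oriented edge) under the action of `g`. -/
def dartAct (g : G) (d : T.graph.Dart) : T.graph.Dart :=
  ⟨(T.act g d.toProd.1, T.act g d.toProd.2), T.adj_act g d.toProd.1 d.toProd.2 d.adj⟩

/-- Three oriented edges are aligned (in this order) if some geodesic crosses them
successively, with the correct orientations. -/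
def Aligned (d₁ d₂ d₃ : T.graph.Dart) : Prop :=
  ∃ (u v : T.V) (p : T.graph.Walk u v), p.IsPath ∧ [d₁, d₂, d₃].Sublist p.darts

end GTree

/-- Two `G`-trees lie in the same deformation space iff they have the same elliptic
subgroups. -/
def SameDef (T T' : GTree G) : Prop := ∀ H : Subgroup G, T.Elliptic H ↔ T'.Elliptic H

/-- An equivariant isomorphism of simplicial `G`-trees. -/
def SimpIso (T T' : GTree G) : Prop :=
  ∃ e : T.V ≃ T'.V, (∀ (g : G) (v : T.V), e (T.act g v) = T'.act g (e v)) ∧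
    ∀ u v : T.V, T.graph.Adj u v ↔ T'.graph.Adj (e u) (e v)

end Trees
section Collapses

variable {G : Type u} [Group G]

/-- Two ordered pairs of adjacent vertices span edges in the same `G`-orbit
(as non-oriented edges). -/
def InEdgeOrbit (T : GTree G) (a b c d : T.V) : Prop :=
  ∃ g : G, (T.act g a = c ∧ T.act g b = d) ∨ (T.act g a = d ∧ T.act g b = c)

/-- `c` exhibits `T'` as a (possibly non-elementary) collapse of `T`: it is equivariant,
surjective, sends non-collapsed edges to edges, is onto the edges of `T'`, and its point
preimages are subtrees. -/
def IsCollapseMap (T T' : GTree G) (c : T.V → T'.V) : Prop :=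
  (∀ (g : G) (v : T.V), c (T.act g v) = T'.act g (c v)) ∧
  Function.Surjective c ∧
  (∀ u v : T.V, T.graph.Adj u v → c u ≠ c v → T'.graph.Adj (c u) (c v)) ∧
  (∀ u' v' : T'.V, T'.graph.Adj u' v' → ∃ u v : T.V, T.graph.Adj u v ∧ c u = u' ∧ c v = v') ∧
  (∀ u v : T.V, c u = c v → ∀ p : T.graph.Walk u v, p.IsPath → ∀ w ∈ p.support, c w = c u)

/-- `T'` is obtained from `T` by a (possibly non-elementary) collapse. -/
def CollapseOf (T' T : GTree G) : Prop := ∃ c : T.V → T'.V, IsCollapseMap T T' c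

/-- `T'` is obtained from `T` by collapsing (exactly) all the edges in the orbit of a
single edge. -/
def IsOrbitCollapse (T' T : GTree G) : Prop :=
  ∃ (c : T.V → T'.V) (u₀ v₀ : T.V), T.graph.Adj u₀ v₀ ∧ IsCollapseMap T T' c ∧
    ∀ u v : T.V, T.graph.Adj u v → (c u = c v ↔ InEdgeOrbit T u v u₀ v₀)

/-- An elementary collapse: collapsing the orbit of a collapsible edge, i.e. an orbit
collapse staying in the same deformation space. -/
def ElemCollapse (T T' : GTree G) : Prop := IsOrbitCollapse T' T ∧ SameDef T T'

/-- An elementary move: an elementary collapse or an elementary expansion. -/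
def ElemMove (T T' : GTree G) : Prop := ElemCollapse T T' ∨ ElemCollapse T' T

/-- An elementary deformation: a finite sequence of elementary collapses and expansions. -/
def ElemDeformation (T T' : GTree G) : Prop := Relation.ReflTransGen ElemMove T T'

/-- A slide move: an edge `f = vx` with `G_f ≤ G_e` slides across `e = vw` (and
equivariantly so does its orbit), becoming an edge `f' = wx`. -/
def SlideMove (T T' : GTree G) : Prop :=
  ∃ (e : T.V ≃ T'.V) (v w x : T.V),
    T.graph.Adj v w ∧ T.graph.Adj v x ∧ w ≠ x ∧
    T.edgeStab v x ≤ T.edgeStab v w ∧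
    ¬InEdgeOrbit T v w v x ∧
    (∀ (g : G) (u : T.V), e (T.act g u) = T'.act g (e u)) ∧
    (∀ a b : T.V, T'.graph.Adj (e a) (e b) ↔
      ((T.graph.Adj a b ∧ ¬InEdgeOrbit T a b v x) ∨ InEdgeOrbit T a b w x))

end Collapses

section MetricTrees

variable (G : Type u) [Group G]

/-- A metric `G`-tree: a simplicial `G`-tree together with an equivariant assignment of
positive lengths to the edges. -/
structure MGTree extends GTree G : Type (u + 1) where
  len : V → V → ℝ
  len_symm : ∀ u v : V, len u v = len v u
  len_pos : ∀ u v : V, graph.Adj u v → 0 < len u v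
  len_equivariant : ∀ (g : G) (u v : V), len (act g u) (act g v) = len u v

variable {G}

namespace MGTree

variable (T : MGTree G)

/-- The length of a walk. -/
noncomputable def walkLen {u v : T.V} (p : T.graph.Walk u v) : ℝ :=
  (p.darts.map fun d => T.len d.toProd.1 d.toProd.2).sum

/-- The distance between two vertices: the length of the unique reduced path joining them. -/
noncomputable def dist (u v : T.V) : ℝ :=
  sInf {x : ℝ | ∃ p : T.graph.Walk u v, p.IsPath ∧ x = T.walkLen p}

/-- The translation length of `g`. -/
noncomputable def ell (g : G) : ℝ :=
  sInf {x : ℝ | ∃ v : T.V, x = T.dist v (T.act g v)}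

/-- The axis (or characteristic set) of `g`: the set of points moved exactly `ℓ(g)`. -/
def Axis (g : G) : Set T.V := {v : T.V | T.dist v (T.act g v) = T.ell g}

/-- `T` is abelian: its length function is the absolute value of a homomorphism to `ℝ`
with cyclic image. -/
def IsAbelian : Prop :=
  ∃ φ : G → ℝ, (∀ g h : G, φ (g * h) = φ g + φ h) ∧
    (∃ a : ℝ, ∀ g : G, ∃ n : ℤ, φ g = (n : ℝ) * a) ∧
    ∀ g : G, T.ell g = |φ g|

/-- Irreducibility for metric trees: two hyperbolic elements with disjoint axes. -/
def Irr : Prop :=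
  ∃ g h : G, T.toGTree.Hyperbolic g ∧ T.toGTree.Hyperbolic h ∧ T.Axis g ∩ T.Axis h = ∅

end MGTree

/-- An equivariant simplicial isomorphism multiplying all edge lengths by `c`. -/
def EquivHomothety (c : ℝ) (T T' : MGTree G) : Prop :=
  ∃ e : T.V ≃ T'.V, (∀ (g : G) (v : T.V), e (T.act g v) = T'.act g (e v)) ∧
    (∀ u v : T.V, T.graph.Adj u v ↔ T'.graph.Adj (e u) (e v)) ∧
    ∀ u v : T.V, T.graph.Adj u v → T'.len (e u) (e v) = c * T.len u v

/-- An equivariant isometry of metric `G`-trees. -/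
def EquivIsometric (T T' : MGTree G) : Prop := EquivHomothety 1 T T'

/-- The action of an automorphism of `G` on metric `G`-trees, by precomposition. -/
def MGTree.precomp (φ : MulAut G) (T : MGTree G) : MGTree G where
  V := T.V
  nonempty := T.nonempty
  graph := T.graph
  isTree := T.isTree
  act := T.act.comp φ.toMonoidHom
  adj_act := fun g u v h => T.adj_act (φ g) u v h
  noInversion := fun g u v h => T.noInversion (φ g) u v h
  minimal := fun S h1 h2 h3 => T.minimal S h1
    (fun g v hv => by simpa using h2 (φ.symm g) v hv) h3
  len := T.len
  len_symm := T.len_symm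
  len_pos := T.len_pos
  len_equivariant := fun g u v => T.len_equivariant (φ g) u v

end MetricTrees
section Topologies

variable (G : Type u) [Group G]

/-- Basic Gromov–Hausdorff neighbourhood of the metric `G`-tree `T` determined by finite
sets `X ⊆ T`, `A ⊆ G` and `ε > 0`: the trees admitting an `ε`-approximate equivariant
lift of `X`. -/
def gromovBasic (T : MGTree G) (X : Finset T.V) (A : Finset G) (ε : ℝ) : Set (MGTree G) :=
  {T' : MGTree G | ∃ f : T.V → T'.V, ∀ x ∈ X, ∀ y ∈ X, ∀ g ∈ A,
    |T.dist x (T.act g y) - T'.dist (f x) (T'.act g (f y))| < ε}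

/-- The equivariant Gromov–Hausdorff topology on the space of metric `G`-trees. -/
noncomputable def gromovTop : TopologicalSpace (MGTree G) where
  IsOpen U := ∀ T ∈ U, ∃ (X : Finset T.V) (A : Finset G) (ε : ℝ), 0 < ε ∧
    gromovBasic G T X A ε ⊆ U
  isOpen_univ := fun T _ => ⟨∅, ∅, 1, one_pos, Set.subset_univ _⟩
  isOpen_inter := by
    intro U V hU hV T hT
    obtain ⟨X₁, A₁, ε₁, hε₁, h₁⟩ := hU T hT.1
    obtain ⟨X₂, A₂, ε₂, hε₂, h₂⟩ := hV T hT.2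
    refine ⟨X₁ ∪ X₂, A₁ ∪ A₂, min ε₁ ε₂, lt_min hε₁ hε₂, ?_⟩
    intro T' hT'
    obtain ⟨f, hf⟩ := hT'
    constructor
    · exact h₁ ⟨f, fun x hx y hy g hg =>
        lt_of_lt_of_le (hf x (Finset.mem_union_left _ hx) y (Finset.mem_union_left _ hy) g
          (Finset.mem_union_left _ hg)) (min_le_left _ _)⟩
    · exact h₂ ⟨f, fun x hx y hy g hg =>
        lt_of_lt_of_le (hf x (Finset.mem_union_right _ hx) y (Finset.mem_union_right _ hy) g
          (Finset.mem_union_right _ hg)) (min_le_right _ _)⟩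
  isOpen_sUnion := by
    intro s hs T hT
    obtain ⟨U, hUs, hTU⟩ := hT
    obtain ⟨X, A, ε, hε, h⟩ := hs U hUs T hTU
    exact ⟨X, A, ε, hε, h.trans (Set.subset_sUnion_of_mem hUs)⟩

variable {G}

/-- The closed cone of the (restricted) deformation space `D` spanned by `T`: the trees
of `D` obtained from trees having the same underlying simplicial tree as `T` by
(elementary) collapses. -/
def closedCone (D : Set (MGTree G)) (T : MGTree G) : Set (MGTree G) :=
  {T' : MGTree G | T' ∈ D ∧ CollapseOf T'.toGTree T.toGTree}

/-- The open cone containing `T`: the trees with the same underlying simplicial tree. -/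
def openCone (D : Set (MGTree G)) (T : MGTree G) : Set (MGTree G) :=
  {T' : MGTree G | T' ∈ D ∧ SimpIso T'.toGTree T.toGTree}

variable (G)

/-- The weak topology on a deformation space `D`: a set is closed if and only if its
intersection with every closed cone of `D` is closed (each closed cone carrying the
Gromov topology). -/
noncomputable def weakTop (D : Set (MGTree G)) : TopologicalSpace ↥D :=
  ⨆ (T : MGTree G) (_ : T ∈ D), TopologicalSpace.coinduced
    (fun x : {S : MGTree G // S ∈ closedCone D T} => (⟨x.1, x.2.1⟩ : ↥D))
    (TopologicalSpace.induced (fun x : {S : MGTree G // S ∈ closedCone D T} => x.1)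
      (gromovTop G))

variable {G}

/-- The projectivizing relation on a deformation space: agreement up to rescaling, i.e.
equivariant homothety. -/
def projRel (D : Set (MGTree G)) (a b : ↥D) : Prop :=
  ∃ c : ℝ, 0 < c ∧ EquivHomothety c a.1 b.1

/-- The relation of equivariant isometry on a deformation space. -/
def isomRel (D : Set (MGTree G)) (a b : ↥D) : Prop := EquivIsometric a.1 b.1

end Topologies

section Morphisms

variable {G : Type u} [Group G]

/-- A morphism of simplicial `G`-trees: an equivariant map sending each edge onto a
non-degenerate edge path (obtained by subdividing the edge into finitely many subsegments,
each mapped bijectively onto an edge). -/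
structure GMorphism (T T' : GTree G) where
  f : T.V → T'.V
  equivariant : ∀ (g : G) (v : T.V), f (T.act g v) = T'.act g (f v)
  edgeWalk : ∀ u v : T.V, T.graph.Adj u v → T'.graph.Walk (f u) (f v)
  edgeWalk_ne_nil : ∀ (u v : T.V) (h : T.graph.Adj u v), ¬(edgeWalk u v h).Nil
  edgeWalk_symm : ∀ (u v : T.V) (h : T.graph.Adj u v),
    (edgeWalk v u h.symm).support = (edgeWalk u v h).support.reverse
  edgeWalk_equivariant : ∀ (g : G) (u v : T.V) (h : T.graph.Adj u v),
    (edgeWalk (T.act g u) (T.act g v) (T.adj_act g u v h)).support =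
      (edgeWalk u v h).support.map (fun x => T'.act g x)

/-- `H` is bi-elliptic in `T`: it fixes two distinct points. -/
def BiElliptic (T : GTree G) (H : Subgroup G) : Prop :=
  ∃ u v : T.V, u ≠ v ∧ ∀ h ∈ H, T.act h u = u ∧ T.act h v = v

/-- `H` is a generalized edge group of `T`: it is squeezed between two edge stabilizers. -/
def GenEdgeGroup (T : GTree G) (H : Subgroup G) : Prop :=
  ∃ u v u' v' : T.V, T.graph.Adj u v ∧ T.graph.Adj u' v' ∧
    T.edgeStab u v ≤ H ∧ H ≤ T.edgeStab u' v'

/-- `H` belongs to `𝒜_min` (relative to the deformation space of `T₀`): it fixes an edge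
in every tree of the deformation space. -/
def Amin (T₀ : GTree G) (H : Subgroup G) : Prop :=
  ∀ T : GTree G, SameDef T₀ T → ∃ u v : T.V, T.graph.Adj u v ∧ H ≤ T.edgeStab u v

/-- A maximal elliptic subgroup (of the deformation space of `T₀`). -/
def MaxElliptic (T₀ : GTree G) (H : Subgroup G) : Prop :=
  T₀.Elliptic H ∧ ∀ K : Subgroup G, T₀.Elliptic K → H ≤ K → K = H

end Morphisms

section OutG

variable (G : Type u) [Group G]

instance innRange_normal : ((MulAut.conj : G →* MulAut G).range).Normal := by
  constructor
  intro a ha φ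
  obtain ⟨g, rfl⟩ := ha
  refine ⟨φ g, ?_⟩
  ext x
  simp only [MulAut.mul_apply, MulAut.conj_apply, map_mul, map_inv]
  simp [MulAut.inv_def]

/-- The outer automorphism group of `G`. -/
def OutG := MulAut G ⧸ (MulAut.conj : G →* MulAut G).range

noncomputable instance : Group (OutG G) := QuotientGroup.Quotient.group _

/-- The class of an automorphism in `Out(G)`. -/
def toOutG (φ : MulAut G) : OutG G := QuotientGroup.mk φ

end OutG
section RealTrees

variable (G : Type u) [Group G]

/-- A non-trivial minimal `ℝ`-tree with an isometric action of `G`: a geodesic metric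
space in which any two points are joined by a unique arc. -/
structure RGTree : Type (u + 1) where
  X : Type u
  [ms : MetricSpace X]
  nontrivial : Nontrivial X
  geodesic : ∀ x y : X, ∃ f : ℝ → X, f 0 = x ∧ f (dist x y) = y ∧
    ∀ s ∈ Set.Icc (0 : ℝ) (dist x y), ∀ t ∈ Set.Icc (0 : ℝ) (dist x y),
      dist (f s) (f t) = |s - t|
  unique_arc : ∀ (x y : X) (γ : Set.Icc (0 : ℝ) 1 → X), Continuous γ →
    Function.Injective γ → γ ⟨0, by constructor <;> norm_num⟩ = x →
    γ ⟨1, by constructor <;> norm_num⟩ = y →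
    ∀ z ∈ Set.range γ, dist x z + dist z y = dist x y
  act : G →* Equiv.Perm X
  isom : ∀ g : G, Isometry (act g)
  minimal : ∀ S : Set X, S.Nonempty → (∀ (g : G), ∀ x ∈ S, act g x ∈ S) →
    (∀ x ∈ S, ∀ y ∈ S, ∀ z : X, dist x z + dist z y = dist x y → z ∈ S) →
    S = Set.univ

attribute [instance] RGTree.ms

variable {G}

namespace RGTree

variable (R : RGTree G)

/-- `z` lies between `x` and `y` (i.e. on the arc from `x` to `y`). -/
def Btw (x z y : R.X) : Prop := dist x z + dist z y = dist x y

/-- A subgroup is elliptic if it fixes a point. -/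
def Elliptic (H : Subgroup G) : Prop := ∃ x : R.X, ∀ h ∈ H, R.act h x = x

/-- A hyperbolic element fixes no point. -/
def Hyperbolic (g : G) : Prop := ∀ x : R.X, R.act g x ≠ x

/-- The translation length of `g`. -/
noncomputable def ell (g : G) : ℝ :=
  sInf {r : ℝ | ∃ x : R.X, r = dist x (R.act g x)}

/-- The characteristic set of `g`: its axis if `g` is hyperbolic, its fixed point set
if `g` is elliptic. -/
def Axis (g : G) : Set R.X := {x : R.X | dist x (R.act g x) = R.ell g}

/-- The fixed point set of `g`. -/
def Fix (g : G) : Set R.X := {x : R.X | R.act g x = x}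

/-- The fixed point set of a subgroup. -/
def FixSub (H : Subgroup G) : Set R.X := {x : R.X | ∀ h ∈ H, R.act h x = x}

/-- Irreducibility: two hyperbolic elements with disjoint characteristic sets. -/
def Irr : Prop :=
  ∃ g h : G, R.Hyperbolic g ∧ R.Hyperbolic h ∧ R.Axis g ∩ R.Axis h = ∅

/-- The distance between the characteristic sets of `g` and `h`. -/
noncomputable def axesDist (g h : G) : ℝ :=
  sInf {r : ℝ | ∃ x ∈ R.Axis g, ∃ y ∈ R.Axis h, r = dist x y}

end RGTree

/-- `f` realizes the metric simplicial `G`-tree `T` inside the `ℝ`-tree `R`. -/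
def IsRealizationMap (R : RGTree G) (T : MGTree G) (f : T.V → R.X) : Prop :=
  (∀ (g : G) (v : T.V), f (T.act g v) = R.act g (f v)) ∧
  (∀ u v : T.V, dist (f u) (f v) = T.dist u v) ∧
  ∀ x : R.X, ∃ u v : T.V, T.graph.Adj u v ∧ R.Btw (f u) x (f v)

/-- The `ℝ`-tree `R` is (equivariantly isometric to) the geometric realization of the
metric simplicial `G`-tree `T`. -/
def RealizationOf (R : RGTree G) (T : MGTree G) : Prop := ∃ f : T.V → R.X, IsRealizationMap R T f

variable (G)

/-- The equivariant Gromov–Hausdorff topology on the space of `ℝ`-trees. -/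
noncomputable def gromovTopR : TopologicalSpace (RGTree G) where
  IsOpen U := ∀ R ∈ U, ∃ (X : Finset R.X) (A : Finset G) (ε : ℝ), 0 < ε ∧
    {R' : RGTree G | ∃ f : R.X → R'.X, ∀ x ∈ X, ∀ y ∈ X, ∀ g ∈ A,
      |dist x (R.act g y) - dist (f x) (R'.act g (f y))| < ε} ⊆ U
  isOpen_univ := fun R _ => ⟨∅, ∅, 1, one_pos, Set.subset_univ _⟩
  isOpen_inter := by
    intro U V hU hV R hR
    obtain ⟨X₁, A₁, ε₁, hε₁, h₁⟩ := hU R hR.1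
    obtain ⟨X₂, A₂, ε₂, hε₂, h₂⟩ := hV R hR.2
    refine ⟨X₁ ∪ X₂, A₁ ∪ A₂, min ε₁ ε₂, lt_min hε₁ hε₂, ?_⟩
    rintro R' ⟨f, hf⟩
    constructor
    · exact h₁ ⟨f, fun x hx y hy g hg =>
        lt_of_lt_of_le (hf x (Finset.mem_union_left _ hx) y (Finset.mem_union_left _ hy) g
          (Finset.mem_union_left _ hg)) (min_le_left _ _)⟩
    · exact h₂ ⟨f, fun x hx y hy g hg =>
        lt_of_lt_of_le (hf x (Finset.mem_union_right _ hx) y (Finset.mem_union_right _ hy) g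
          (Finset.mem_union_right _ hg)) (min_le_right _ _)⟩
  isOpen_sUnion := by
    intro s hs R hR
    obtain ⟨U, hUs, hRU⟩ := hR
    obtain ⟨X, A, ε, hε, h⟩ := hs U hUs R hRU
    exact ⟨X, A, ε, hε, h.trans (Set.subset_sUnion_of_mem hUs)⟩

/-- The axes topology: the coarsest topology making all translation length functions
continuous. -/
noncomputable def axesTopR : TopologicalSpace (RGTree G) :=
  TopologicalSpace.induced (fun (R : RGTree G) (g : G) => R.ell g) Pi.topologicalSpace

variable {G}

/-- A morphism of `ℝ`-trees: an equivariant map such that every segment is a finite union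
of subsegments on each of which the map is isometric. -/
structure RMorphism (R S : RGTree G) where
  f : R.X → S.X
  equivariant : ∀ (g : G) (x : R.X), f (R.act g x) = S.act g (f x)
  piecewise : ∀ x y : R.X, ∃ (n : ℕ) (c : Fin (n + 1) → R.X),
    c 0 = x ∧ c (Fin.last n) = y ∧ (∀ i : Fin (n + 1), R.Btw x (c i) y) ∧
    ∀ i : Fin n, ∀ p q : R.X, R.Btw (c i.castSucc) p (c i.succ) →
      R.Btw (c i.castSucc) q (c i.succ) → dist (f p) (f q) = dist p q

/-- `M` is the intermediate tree at time `t` of Skora's deformation of the morphism `φ`: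
the quotient of the source in which `x` and `y` are identified exactly when `φ` maps the
segment `[x,y]` into the ball of radius `t` around `φ(x) = φ(y)`. -/
def IsSkoraIntermediate {R S : RGTree G} (φ : RMorphism R S) (t : ℝ) (M : RGTree G) : Prop :=
  ∃ (p : R.X → M.X) (q : M.X → S.X), Function.Surjective p ∧
    (∀ (g : G) (x : R.X), p (R.act g x) = M.act g (p x)) ∧
    (∀ (g : G) (m : M.X), q (M.act g m) = S.act g (q m)) ∧
    (∀ x : R.X, q (p x) = φ.f x) ∧
    (∀ x y : R.X, dist (p x) (p y) ≤ dist x y) ∧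
    (∀ m m' : M.X, dist (q m) (q m') ≤ dist m m') ∧
    ∀ x y : R.X, p x = p y ↔ (φ.f x = φ.f y ∧
      ∀ z : R.X, R.Btw x z y → dist (φ.f z) (φ.f x) ≤ t)

/-- `P` is the basepoint of `R` determined by `g` and `h` (the endpoint of the
intersection of the two characteristic sets, resp. the projection of one onto the other),
characterized by the metric system (1) of [Guirardel–Levitt]. -/
noncomputable def IsBasepoint (R : RGTree G) (g h : G) (P : R.X) : Prop :=
  dist P (R.act g P) = R.ell g ∧
  dist P (R.act h P) = R.ell h + 2 * R.axesDist g h ∧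
  dist (R.act g P) (R.act h P) = R.ell g + R.ell h + 2 * R.axesDist g h ∧
  dist (R.act g P) (R.act h⁻¹ P) = R.ell g + R.ell h + 2 * R.axesDist g h

/-- `p` is a projection of `x` to the set `S` (a closest point of `S`). -/
def IsProj (R : RGTree G) (x : R.X) (S : Set R.X) (p : R.X) : Prop :=
  p ∈ S ∧ ∀ q ∈ S, dist x p ≤ dist x q

/-- Equivariant isometry of `ℝ`-trees. -/
def RIsom (R R' : RGTree G) : Prop :=
  ∃ e : R.X ≃ R'.X, (∀ (g : G) (x : R.X), e (R.act g x) = R'.act g (e x)) ∧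
    ∀ x y : R.X, dist (e x) (e y) = dist x y

/-- Equivariant homothety of `ℝ`-trees, with ratio `c`. -/
def RHomothety (c : ℝ) (R R' : RGTree G) : Prop :=
  ∃ e : R.X ≃ R'.X, (∀ (g : G) (x : R.X), e (R.act g x) = R'.act g (e x)) ∧
    ∀ x y : R.X, dist (e x) (e y) = c * dist x y

end RealTrees
section MoreDefs

variable {G : Type u} [Group G]

/-- `H` is contained in a conjugate of `K`. -/
def ConjLe (H K : Subgroup G) : Prop := ∃ g : G, ∀ h ∈ H, g * h * g⁻¹ ∈ K

/-- `H` represents a maximal element of the vertical set `ℳ` associated to the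
deformation space of `T₀`. -/
def MaxVert (T₀ : GTree G) (H : Subgroup G) : Prop :=
  T₀.Elliptic H ∧ ∀ K : Subgroup G, T₀.Elliptic K → ConjLe H K → ConjLe K H

/-- The vertical set `ℳ`: equivalence classes of maximal elements for containment in a
conjugate, among elliptic subgroups. -/
def vertSet (T₀ : GTree G) : Type u :=
  Quot (fun H K : {H : Subgroup G // MaxVert T₀ H} => ConjLe H.1 K.1 ∧ ConjLe K.1 H.1)

namespace GTree

variable (T : GTree G)

/-- The set of `G`-orbits of vertices (the vertices of the quotient graph `T/G`). -/
def vertexOrbits : Type u := Quot (fun u v : T.V => ∃ g : G, T.act g u = v)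

/-- Orbits of neighbours of `v` under the stabilizer of `v`: the oriented edges of the
quotient graph of groups issued from the image of `v`, whose number is the valence of
the image of `v`. -/
def nbrOrbits (v : T.V) : Type u :=
  Quot (fun a b : {w : T.V // T.graph.Adj v w} => ∃ g : G, T.act g v = v ∧ T.act g a.1 = b.1)

/-- The set of `G`-orbits of (non-oriented) edges. -/
def edgeOrbits : Type u :=
  Quot (fun d d' : T.graph.Dart => ∃ g : G, T.dartAct g d = d' ∨ T.dartAct g d = d'.symm)

/-- BF-reduced: if an edge-to-vertex inclusion `G_e → G_u` is onto, then the image of `u`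
in the quotient graph has valence at least 3. -/
def BFReduced : Prop :=
  ∀ u w : T.V, T.graph.Adj u w → T.stab u ≤ T.stab w →
    3 ≤ Cardinal.mk (T.nbrOrbits u)

end GTree

/-- The quotient graph of groups of `T` has a strict ascending loop: an edge whose
endpoints are in the same orbit, exactly one of the two edge-to-vertex inclusions
being onto. -/
def HasSAL (T : GTree G) : Prop :=
  ∃ u v : T.V, T.graph.Adj u v ∧ (∃ g : G, T.act g u = v) ∧
    Xor' (T.stab u ≤ T.stab v) (T.stab v ≤ T.stab u)

/-- The edge (orbit of) `uv` is a surviving edge: `T` can be made reduced by a collapse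
(within its deformation space) not collapsing `uv`. -/
def Surviving (T : GTree G) (u v : T.V) : Prop :=
  ∃ (T' : GTree G) (c : T.V → T'.V), IsCollapseMap T T' c ∧ SameDef T T' ∧
    T'.Reduced ∧ c u ≠ c v

/-- Containment in a conjugate by an element of `G₀`. -/
def perLe (G₀ : Subgroup G) (H K : Subgroup G) : Prop :=
  ∃ g ∈ G₀, ∀ h ∈ H, g * h * g⁻¹ ∈ K

/-- `H` represents a maximal element of the peripheral structure `ℳ₀` of `G₀`. -/
def PeriphMax (T₀ : GTree G) (G₀ : Subgroup G) (H : Subgroup G) : Prop :=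
  H ≤ G₀ ∧ Amin T₀ H ∧
    ∀ K : Subgroup G, K ≤ G₀ → Amin T₀ K → perLe G₀ H K → perLe G₀ K H

/-- The peripheral structure `ℳ₀` of `G₀`, as a set of equivalence classes. -/
def periphSet (T₀ : GTree G) (G₀ : Subgroup G) : Type u :=
  Quot (fun H K : {H : Subgroup G // PeriphMax T₀ G₀ H} =>
    perLe G₀ H.1 K.1 ∧ perLe G₀ K.1 H.1)

end MoreDefs

/-!
A subgroup fixing two points fixes an edge `uv`. If `⟨G_u, G_v⟩` is not elliptic, this is
case (1) with `A = G_u` and `B = G_v`. Otherwise one of the two stabilizers contains the other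
(the path from their common fixed point to `u` or to `v` passes through the other endpoint),
say `G_u ≤ G_v`. Reducedness then gives `g` with `g • u = v`; it is hyperbolic because it moves
a vertex to an adjacent one, and `g⁻¹ G_u g ≤ G_u`, which is case (2). Conversely, in case (1)
`A` and `B` fix distinct points, and in case (2) `K` fixes `v` and `g • v`. Both conditions
only involve elliptic subgroups and hyperbolic elements, which depend only on the deformation
space.
-/

namespace SimpleGraph

variable {V W : Type*} {G : SimpleGraph V} {G' : SimpleGraph W}

lemma dist_map_le (f : G →g G') {u v : V} (h : G.Reachable u v) :
    G'.dist (f u) (f v) ≤ G.dist u v := by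
  obtain ⟨p, hp⟩ := h.exists_walk_length_eq_dist
  simpa [hp] using G'.dist_le (p.map f)

end SimpleGraph

lemma BiElliptic.mono {G : Type u} [Group G] {T : GTree G} {H K : Subgroup G}
    (hK : BiElliptic T K) (hHK : H ≤ K) : BiElliptic T H := by
  obtain ⟨u, v, huv, hfix⟩ := hK
  exact ⟨u, v, huv, fun h hh => hfix h (hHK hh)⟩

namespace GTree

variable {G : Type u} [Group G] (T : GTree G)

def actHom (g : G) : T.graph →g T.graph :=
  ⟨T.act g, T.adj_act g _ _⟩

@[simp]
lemma actHom_apply (g : G) (v : T.V) : T.actHom g v = T.act g v :=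
  rfl

lemma dist_act (g : G) (u v : T.V) :
    T.graph.dist (T.act g u) (T.act g v) = T.graph.dist u v := by
  refine le_antisymm (SimpleGraph.dist_map_le (T.actHom g) (T.isTree.connected u v)) ?_
  simpa using SimpleGraph.dist_map_le (T.actHom g⁻¹)
    (T.isTree.connected (T.act g u) (T.act g v))

/-- By uniqueness of paths, the image of `p` under `h` is `p` itself. -/
lemma act_eq_of_mem_support {h : G} {a b z : T.V} (ha : T.act h a = a) (hb : T.act h b = b)
    {p : T.graph.Walk a b} (hp : p.IsPath) (hz : z ∈ p.support) : T.act h z = z := by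
  have himage : (p.map (T.actHom h)).copy ha hb = p :=
    congrArg Subtype.val <| (T.isTree.isAcyclic.subsingleton_path a b).elim
      ⟨_, (SimpleGraph.Walk.isPath_copy _ ha hb).2 (hp.map (T.act h).injective)⟩ ⟨p, hp⟩
  obtain ⟨n, rfl, -⟩ := SimpleGraph.Walk.mem_support_iff_exists_getVert.1 hz
  calc T.act h (p.getVert n) = ((p.map (T.actHom h)).copy ha hb).getVert n :=
        (p.getVert_map (T.actHom h) n).symm.trans (SimpleGraph.Walk.getVert_copy _ n ha hb).symm
    _ = p.getVert n := by rw [himage]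

lemma exists_adj_le_edgeStab_of_biElliptic {H : Subgroup G} (hH : BiElliptic T H) :
    ∃ u v : T.V, T.graph.Adj u v ∧ H ≤ T.edgeStab u v := by
  obtain ⟨u, v, huv, hfix⟩ := hH
  obtain ⟨p, hp, -⟩ := T.isTree.existsUnique_path u v
  have hne : ¬p.Nil := SimpleGraph.Walk.not_nil_of_ne huv
  refine ⟨u, p.snd, SimpleGraph.Walk.adj_snd hne, fun h hh => ⟨(hfix h hh).1, ?_⟩⟩
  exact T.act_eq_of_mem_support (hfix h hh).1 (hfix h hh).2 hp (p.getVert_mem_support 1)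

/-- An element moving a vertex to an adjacent one is hyperbolic: a fixed point would be
equidistant from two adjacent vertices, which is impossible in a tree. -/
lemma hyperbolic_of_adj_act {g : G} {x : T.V} (hadj : T.graph.Adj x (T.act g x)) :
    T.Hyperbolic g := fun w hw =>
  T.isTree.dist_ne_of_adj w hadj (by rw [← T.dist_act g w x, hw])

lemma elliptic_stab (v : T.V) : T.Elliptic (T.stab v) :=
  ⟨v, fun _ => id⟩

lemma stab_le_or_le_of_elliptic_sup {x y : T.V} (hadj : T.graph.Adj x y)
    (hxy : T.Elliptic (T.stab x ⊔ T.stab y)) :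
    T.stab x ≤ T.stab y ∨ T.stab y ≤ T.stab x := by
  obtain ⟨w, hw⟩ := hxy
  obtain ⟨p, hp, -⟩ := T.isTree.existsUnique_path w x
  obtain ⟨q, hq, -⟩ := T.isTree.existsUnique_path w y
  by_cases hxq : x ∈ q.support
  · exact Or.inr fun b hb =>
      T.act_eq_of_mem_support (hw b (Subgroup.mem_sup_right hb)) hb hq hxq
  · have hyp := T.isTree.isAcyclic.mem_support_of_ne_mem_support_of_adj_of_isPath hp hq hadj hxq
    exact Or.inl fun a ha =>
      T.act_eq_of_mem_support (hw a (Subgroup.mem_sup_left ha)) ha hp hyp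

lemma exists_hyperbolic_conj_le_stab (hT : T.Reduced) {x y : T.V} (hadj : T.graph.Adj x y)
    (hle : T.stab x ≤ T.stab y) :
    ∃ g : G, T.Hyperbolic g ∧ ∀ k ∈ T.stab x, g⁻¹ * k * g ∈ T.stab x := by
  obtain ⟨g, rfl⟩ := hT x y hadj hle
  refine ⟨g, T.hyperbolic_of_adj_act hadj, fun k hk => ?_⟩
  have hkg : T.act k (T.act g x) = T.act g x := hle hk
  change T.act (g⁻¹ * k * g) x = x
  simp [hkg]

lemma biElliptic_inf_of_not_elliptic_sup {A B : Subgroup G} (hA : T.Elliptic A)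
    (hB : T.Elliptic B) (hAB : ¬T.Elliptic (A ⊔ B)) : BiElliptic T (A ⊓ B) := by
  obtain ⟨a, ha⟩ := hA
  obtain ⟨b, hb⟩ := hB
  refine ⟨a, b, ?_, fun h hh => ⟨ha h hh.1, hb h hh.2⟩⟩
  rintro rfl
  exact hAB ⟨a, fun h hh => (sup_le (a := A) (b := B) (c := T.stab a) ha hb) hh⟩

/-- `K` fixes both `v` and `g • v`. -/
lemma biElliptic_of_conj_le {K : Subgroup G} (hK : T.Elliptic K) {g : G}
    (hg : T.Hyperbolic g) (hconj : ∀ k ∈ K, g⁻¹ * k * g ∈ K) : BiElliptic T K := by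
  obtain ⟨v, hv⟩ := hK
  refine ⟨v, T.act g v, fun h => hg v h.symm, fun k hk => ⟨hv k hk, ?_⟩⟩
  rw [← Equiv.Perm.mul_apply, ← map_mul, show k * g = g * (g⁻¹ * k * g) by group, map_mul,
    Equiv.Perm.mul_apply, hv _ (hconj k hk)]

lemma hyperbolic_iff_not_elliptic_zpowers (g : G) :
    T.Hyperbolic g ↔ ¬T.Elliptic (Subgroup.zpowers g) := by
  refine ⟨fun hg ⟨v, hv⟩ => hg v (hv g (Subgroup.mem_zpowers g)), fun hg v hgv => hg ⟨v, ?_⟩⟩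
  rintro _ ⟨n, rfl⟩
  rw [map_zpow]
  exact Function.IsFixedPt.perm_zpow hgv n

theorem biElliptic_iff (hT : T.Reduced) (H : Subgroup G) :
    BiElliptic T H ↔ ∃ K : Subgroup G, H ≤ K ∧
      ((∃ A B : Subgroup G, T.Elliptic A ∧ T.Elliptic B ∧ ¬T.Elliptic (A ⊔ B) ∧ K = A ⊓ B) ∨
        (T.Elliptic K ∧ ∃ g : G, T.Hyperbolic g ∧ ∀ k ∈ K, g⁻¹ * k * g ∈ K)) := by
  constructor
  · intro hH
    obtain ⟨u, v, hadj, hHuv⟩ := T.exists_adj_le_edgeStab_of_biElliptic hH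
    by_cases huv : T.Elliptic (T.stab u ⊔ T.stab v)
    · rcases T.stab_le_or_le_of_elliptic_sup hadj huv with hle | hle
      · exact ⟨T.stab u, hHuv.trans inf_le_left,
          Or.inr ⟨T.elliptic_stab u, T.exists_hyperbolic_conj_le_stab hT hadj hle⟩⟩
      · exact ⟨T.stab v, hHuv.trans inf_le_right,
          Or.inr ⟨T.elliptic_stab v, T.exists_hyperbolic_conj_le_stab hT hadj.symm hle⟩⟩
    · exact ⟨_, hHuv,
        Or.inl ⟨_, _, T.elliptic_stab u, T.elliptic_stab v, huv, rfl⟩⟩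
  · rintro ⟨K, hHK, ⟨A, B, hA, hB, hAB, rfl⟩ | ⟨hK, g, hg, hconj⟩⟩
    · exact (T.biElliptic_inf_of_not_elliptic_sup hA hB hAB).mono hHK
    · exact (T.biElliptic_of_conj_le hK hg hconj).mono hHK

end GTree

theorem statement_4_general {G : Type u} [Group G] :
    (∀ T : GTree G, T.Reduced → ∀ H : Subgroup G,
      (BiElliptic T H ↔ ∃ K : Subgroup G, H ≤ K ∧
        ((∃ A B : Subgroup G, T.Elliptic A ∧ T.Elliptic B ∧ ¬T.Elliptic (A ⊔ B) ∧
            K = A ⊓ B) ∨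
          (T.Elliptic K ∧ ∃ g : G, T.Hyperbolic g ∧ ∀ k ∈ K, g⁻¹ * k * g ∈ K)))) ∧
    (∀ T T' : GTree G, T.Reduced → T'.Reduced → SameDef T T' →
      ∀ H : Subgroup G, BiElliptic T H ↔ BiElliptic T' H) := by
  refine ⟨fun T hT H => T.biElliptic_iff hT H, fun T T' hT hT' hDef H => ?_⟩
  have hEll : T.Elliptic = T'.Elliptic := funext fun K => propext (hDef K)
  have hHyp : T.Hyperbolic = T'.Hyperbolic := funext fun g => propext <| by
    rw [T.hyperbolic_iff_not_elliptic_zpowers, T'.hyperbolic_iff_not_elliptic_zpowers, hEll]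
  rw [T.biElliptic_iff hT, T'.biElliptic_iff hT', hEll, hHyp]

/-- **Proposition (Guirardel–Levitt, Proposition 4.7).** Let `T` be a reduced `G`-tree.
A subgroup `H` is bi-elliptic in `T` if and only if it is contained in a subgroup `K`
such that either `K = A ∩ B` with `A`, `B` elliptic and `⟨A, B⟩` not elliptic, or `K` is
elliptic and `K ⊆ gKg⁻¹` for some hyperbolic `g`.  In particular all reduced trees in a
given deformation space have the same bi-elliptic subgroups. -/
theorem statement_4 {G : Type u} [Group G] [Group.FG G] :
    (∀ T : GTree G, T.Reduced → ∀ H : Subgroup G,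
      (BiElliptic T H ↔ ∃ K : Subgroup G, H ≤ K ∧
        ((∃ A B : Subgroup G, T.Elliptic A ∧ T.Elliptic B ∧ ¬T.Elliptic (A ⊔ B) ∧
            K = A ⊓ B) ∨
          (T.Elliptic K ∧ ∃ g : G, T.Hyperbolic g ∧ ∀ k ∈ K, g⁻¹ * k * g ∈ K)))) ∧
    (∀ T T' : GTree G, T.Reduced → T'.Reduced → SameDef T T' →
      ∀ H : Subgroup G, BiElliptic T H ↔ BiElliptic T' H) :=
  statement_4_general
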